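/- Fix μ > 0 and for t > 0 define f_t : [0,t] → ℝ by f_t(u) := 2t·(e^{−2μu} − e^{−2μt})/(1 + e^{−2μu} − 2e^{−2μt}) − t + u, and set X₋(t) := 2tμ(1 − e^{−2μt}) + 2e^{−2μt} − 1 − √( (1 − 2e^{−2μt} − 2tμ(1 − e^{−2μt}))² − (1 − 2e^{−2μt})² ) and c_t := −log(X₋(t))/(2μ). Then for all sufficiently large t: 0 < c_t < t, the derivative of f_t is non-positive on [0, c_t] and non-negative on [c_t, t] (so f_t is non-increasing on [0,c_t] and non-decreasing on [c_t,t]); moreover lim_{t→∞} c_t/log t = 1/(2μ). -/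

import Mathlib

open Real Filter

/-- The exponent in the second-moment integral for a branching Ornstein-Uhlenbeck process
with spring constant `μ`. -/
noncomputable def fExp (μ t u : ℝ) : ℝ :=
  2 * t * (Real.exp (-(2 * μ * u)) - Real.exp (-(2 * μ * t))) /
    (1 + Real.exp (-(2 * μ * u)) - 2 * Real.exp (-(2 * μ * t))) - t + u

/-- The smaller root `X₋(t)` of the quadratic governing the sign of `f_t'`. -/
noncomputable def Xminus (μ t : ℝ) : ℝ :=
  2 * t * μ * (1 - Real.exp (-(2 * μ * t))) + 2 * Real.exp (-(2 * μ * t)) - 1 -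
    Real.sqrt ((1 - 2 * Real.exp (-(2 * μ * t)) - 2 * t * μ * (1 - Real.exp (-(2 * μ * t)))) ^ 2 -
      (1 - 2 * Real.exp (-(2 * μ * t))) ^ 2)

/-- The critical time `c_t = -log(X₋(t))/(2μ)`. -/
noncomputable def cCrit (μ t : ℝ) : ℝ := -Real.log (Xminus μ t) / (2 * μ)

set_option linter.unusedSectionVars false

namespace BOUaux

noncomputable def aa (μ t : ℝ) : ℝ := Real.exp (-(2 * μ * t))
noncomputable def Bq (μ t : ℝ) : ℝ := 2 * t * μ * (1 - aa μ t) - (1 - 2 * aa μ t)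
noncomputable def cc (μ t : ℝ) : ℝ := 1 - 2 * aa μ t
noncomputable def Dq (μ t : ℝ) : ℝ := Bq μ t ^ 2 - cc μ t ^ 2

lemma Xminus_eq (μ t : ℝ) : Xminus μ t = Bq μ t - Real.sqrt (Dq μ t) := by
  have h : (1 - 2 * Real.exp (-(2 * μ * t)) - 2 * t * μ * (1 - Real.exp (-(2 * μ * t)))) ^ 2 -
      (1 - 2 * Real.exp (-(2 * μ * t))) ^ 2 = Dq μ t := by
    unfold Dq Bq cc aa; ring
  unfold Xminus
  rw [h]
  unfold Bq aa
  ring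

lemma hasDerivAt_fExp (μ t u : ℝ)
    (hden : 1 + Real.exp (-(2 * μ * u)) - 2 * Real.exp (-(2 * μ * t)) ≠ 0) :
    HasDerivAt (fExp μ t)
      (1 - 4 * t * μ * Real.exp (-(2 * μ * u)) * (1 - Real.exp (-(2 * μ * t))) /
        (1 + Real.exp (-(2 * μ * u)) - 2 * Real.exp (-(2 * μ * t))) ^ 2) u := by
  set a := Real.exp (-(2 * μ * t)) with ha
  have h1 : HasDerivAt (fun u : ℝ => -(2 * μ * u)) (-(2 * μ)) u := by
    simpa using ((hasDerivAt_id u).const_mul (2 * μ)).fun_neg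
  have hx : HasDerivAt (fun u : ℝ => Real.exp (-(2 * μ * u)))
      (Real.exp (-(2 * μ * u)) * -(2 * μ)) u := h1.exp
  have hnum : HasDerivAt (fun u : ℝ => 2 * t * (Real.exp (-(2 * μ * u)) - a))
      (2 * t * (Real.exp (-(2 * μ * u)) * -(2 * μ))) u := (hx.sub_const a).const_mul (2 * t)
  have hd : HasDerivAt (fun u : ℝ => 1 + Real.exp (-(2 * μ * u)) - 2 * a)
      (Real.exp (-(2 * μ * u)) * -(2 * μ)) u := by
    simpa using ((hx.const_add 1).sub_const (2 * a))
  have hq := (hnum.div hd hden).sub_const t |>.add (hasDerivAt_id u)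
  convert hq using 1
  · rfl
  · rfl
  · rfl
  field_simp
  ring

lemma aa_tendsto (μ : ℝ) (hμ : 0 < μ) : Tendsto (fun t : ℝ => aa μ t) atTop (nhds 0) := by
  have h2 : Tendsto (fun t : ℝ => 2 * μ * t) atTop atTop :=
    Tendsto.const_mul_atTop (by positivity) tendsto_id
  exact (Real.tendsto_exp_neg_atTop_nhds_zero.comp h2).congr fun t => rfl

lemma eventual_bounds (μ : ℝ) (hμ : 0 < μ) :
    ∀ᶠ t in atTop, aa μ t < 1/8 ∧ t * μ * aa μ t < 1/16 ∧ 2 ≤ t * μ ∧ 1 < t := by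
  have ha0 := aa_tendsto μ hμ
  have hta : Tendsto (fun t : ℝ => t * μ * aa μ t) atTop (nhds 0) := by
    have h1 : Tendsto (fun x : ℝ => x ^ 1 * Real.exp (-x)) atTop (nhds 0) :=
      tendsto_pow_mul_exp_neg_atTop_nhds_zero 1
    have h2 : Tendsto (fun t : ℝ => 2 * μ * t) atTop atTop :=
      Tendsto.const_mul_atTop (by positivity) tendsto_id
    have h3 := (h1.comp h2).const_mul (1/2 : ℝ)
    simp only [Function.comp, pow_one, mul_zero] at h3
    refine h3.congr (fun t => ?_)
    unfold aa
    ring_nf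
  have h1 := ha0.eventually (eventually_lt_nhds (show (0:ℝ) < 1/8 by norm_num))
  have h2 := hta.eventually (eventually_lt_nhds (show (0:ℝ) < 1/16 by norm_num))
  have h3 : ∀ᶠ t : ℝ in atTop, 2 ≤ t * μ :=
    (Tendsto.atTop_mul_const hμ tendsto_id).eventually_ge_atTop 2
  filter_upwards [h1, h2, h3, eventually_gt_atTop 1] with t u1 u2 u3 u4
  exact ⟨u1, u2, u3, u4⟩

section facts
variable {μ t : ℝ} (hμ : 0 < μ) (h1 : aa μ t < 1/8) (h2 : t * μ * aa μ t < 1/16)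
  (h3 : 2 ≤ t * μ) (h4 : 1 < t)

include hμ h1 h2 h3 h4

lemma ha_pos : 0 < aa μ t := Real.exp_pos _

lemma hc_lb : 3/4 < cc μ t := by unfold cc; linarith

lemma hc_ub : cc μ t < 1 := by
  unfold cc aa; linarith [Real.exp_pos (-(2 * μ * t))]

lemma hB_lb : 5/2 ≤ Bq μ t := by
  have ha := Real.exp_pos (-(2 * μ * t))
  unfold Bq aa at *
  nlinarith

lemma hD_pos : 0 < Dq μ t := by
  have hb := hB_lb hμ h1 h2 h3 h4
  have hcl := hc_lb hμ h1 h2 h3 h4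
  have hcu := hc_ub hμ h1 h2 h3 h4
  unfold Dq
  nlinarith

lemma sqrtD_lt_B : Real.sqrt (Dq μ t) < Bq μ t := by
  have hb := hB_lb hμ h1 h2 h3 h4
  have hcl := hc_lb hμ h1 h2 h3 h4
  have hD := hD_pos hμ h1 h2 h3 h4
  have h5 : Dq μ t < Bq μ t ^ 2 := by unfold Dq; nlinarith
  calc Real.sqrt (Dq μ t) < Real.sqrt (Bq μ t ^ 2) := Real.sqrt_lt_sqrt hD.le h5
    _ = Bq μ t := by rw [Real.sqrt_sq (by linarith)]

lemma hX_pos : 0 < Xminus μ t := by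
  rw [Xminus_eq]; linarith [sqrtD_lt_B hμ h1 h2 h3 h4]

lemma root_eq : Xminus μ t ^ 2 - 2 * Bq μ t * Xminus μ t + cc μ t ^ 2 = 0 := by
  have hD := hD_pos hμ h1 h2 h3 h4
  have hs : Real.sqrt (Dq μ t) ^ 2 = Dq μ t := Real.sq_sqrt hD.le
  rw [Xminus_eq]
  have hDd : Dq μ t = Bq μ t ^ 2 - cc μ t ^ 2 := rfl
  nlinarith [hs]

lemma hX_le_B : Xminus μ t ≤ Bq μ t := by
  rw [Xminus_eq]; linarith [Real.sqrt_nonneg (Dq μ t)]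

lemma hX_lt_one : Xminus μ t < 1 := by
  have hr := root_eq hμ h1 h2 h3 h4
  have hb := hB_lb hμ h1 h2 h3 h4
  have hcu := hc_ub hμ h1 h2 h3 h4
  have hXB := hX_le_B hμ h1 h2 h3 h4
  have hX0 := hX_pos hμ h1 h2 h3 h4
  by_contra hcon
  push_neg at hcon
  have hcl := hc_lb hμ h1 h2 h3 h4
  have hXX : Xminus μ t * Xminus μ t ≤ Bq μ t * Xminus μ t :=
    mul_le_mul_of_nonneg_right hXB hX0.le
  have hBX : (5/2 : ℝ) * 1 ≤ Bq μ t * Xminus μ t :=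
    mul_le_mul hb hcon (by norm_num) (by linarith)
  nlinarith

lemma ha_lt_X : aa μ t < Xminus μ t := by
  have hr := root_eq hμ h1 h2 h3 h4
  have hb := hB_lb hμ h1 h2 h3 h4
  have hcl := hc_lb hμ h1 h2 h3 h4
  have hX0 := hX_pos hμ h1 h2 h3 h4
  have ha0 : 0 < aa μ t := Real.exp_pos _
  have hQa : aa μ t ^ 2 - 2 * Bq μ t * aa μ t + cc μ t ^ 2 > 0 := by
    unfold Bq cc; nlinarith
  by_contra hcon
  push_neg at hcon
  nlinarith

lemma two_mu_cCrit : 2 * μ * cCrit μ t = -Real.log (Xminus μ t) := by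
  unfold cCrit; field_simp

lemma cCrit_pos : 0 < cCrit μ t := by
  have h := Real.log_neg (hX_pos hμ h1 h2 h3 h4) (hX_lt_one hμ h1 h2 h3 h4)
  unfold cCrit
  exact div_pos (by linarith) (by positivity)

lemma cCrit_lt : cCrit μ t < t := by
  have h := Real.log_lt_log (Real.exp_pos _) (ha_lt_X hμ h1 h2 h3 h4)
  rw [Real.log_exp] at h
  unfold cCrit
  rw [div_lt_iff₀ (by positivity)]
  linarith

lemma hden_pos (u : ℝ) : 0 < 1 + Real.exp (-(2 * μ * u)) - 2 * Real.exp (-(2 * μ * t)) := by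
  have hh : aa μ t < 1/8 := h1
  unfold aa at hh
  nlinarith [Real.exp_pos (-(2 * μ * u))]

lemma deriv_nonpos_of (u : ℝ) (hl : Xminus μ t ≤ Real.exp (-(2 * μ * u)))
    (hu : Real.exp (-(2 * μ * u)) ≤ 1) : deriv (fExp μ t) u ≤ 0 := by
  have hd := (hasDerivAt_fExp μ t u (hden_pos hμ h1 h2 h3 h4 u).ne').deriv
  rw [hd]
  set x := Real.exp (-(2 * μ * u)) with hx
  have hxpos : 0 < x := Real.exp_pos _
  have hr := root_eq hμ h1 h2 h3 h4
  have hb := hB_lb hμ h1 h2 h3 h4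
  have hX0 := hX_pos hμ h1 h2 h3 h4
  have hX1 := hX_lt_one hμ h1 h2 h3 h4
  have key : (1 + x - 2 * aa μ t) ^ 2 ≤ 4 * t * μ * x * (1 - aa μ t) := by
    have hfn : (x - Xminus μ t) * (x + Xminus μ t - 2 * Bq μ t) ≤ 0 := by
      apply mul_nonpos_of_nonneg_of_nonpos <;> nlinarith
    unfold Bq cc aa at *
    nlinarith
  have hdpos : 0 < (1 + x - 2 * Real.exp (-(2 * μ * t))) ^ 2 := by
    have hne := hden_pos hμ h1 h2 h3 h4 u
    rw [← hx] at hne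
    exact pow_pos hne 2
  rw [sub_nonpos, le_div_iff₀ hdpos]
  unfold aa at key
  linarith

lemma deriv_nonneg_of (u : ℝ) (hl : aa μ t ≤ Real.exp (-(2 * μ * u)))
    (hu : Real.exp (-(2 * μ * u)) ≤ Xminus μ t) : 0 ≤ deriv (fExp μ t) u := by
  have hd := (hasDerivAt_fExp μ t u (hden_pos hμ h1 h2 h3 h4 u).ne').deriv
  rw [hd]
  set x := Real.exp (-(2 * μ * u)) with hx
  have hxpos : 0 < x := Real.exp_pos _
  have hr := root_eq hμ h1 h2 h3 h4
  have hb := hB_lb hμ h1 h2 h3 h4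
  have hX0 := hX_pos hμ h1 h2 h3 h4
  have hX1 := hX_lt_one hμ h1 h2 h3 h4
  have key : 4 * t * μ * x * (1 - aa μ t) ≤ (1 + x - 2 * aa μ t) ^ 2 := by
    have hfn : 0 ≤ (x - Xminus μ t) * (x + Xminus μ t - 2 * Bq μ t) := by
      nlinarith [mul_nonneg (show (0:ℝ) ≤ Xminus μ t - x by nlinarith)
        (show (0:ℝ) ≤ 2 * Bq μ t - (x + Xminus μ t) by nlinarith)]
    unfold Bq cc aa at *
    nlinarith
  have hdpos : 0 < (1 + x - 2 * Real.exp (-(2 * μ * t))) ^ 2 := by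
    have hne := hden_pos hμ h1 h2 h3 h4 u
    rw [← hx] at hne
    exact pow_pos hne 2
  rw [sub_nonneg, div_le_one hdpos]
  unfold aa at key
  linarith

end facts

lemma tX_tendsto (μ : ℝ) (hμ : 0 < μ) :
    Tendsto (fun t : ℝ => t * Xminus μ t) atTop (nhds (1 / (4 * μ))) := by
  have ha0 := aa_tendsto μ hμ
  have hc1 : Tendsto (fun t : ℝ => cc μ t) atTop (nhds 1) := by
    have h := (tendsto_const_nhds (x := (1:ℝ)) (f := atTop (α := ℝ))).sub (ha0.const_mul 2)
    simpa [cc] using h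
  have hinv : Tendsto (fun t : ℝ => 1 / t) atTop (nhds 0) := by
    simpa [one_div] using tendsto_inv_atTop_zero
  have hBt : Tendsto (fun t : ℝ => Bq μ t / t) atTop (nhds (2 * μ)) := by
    have h := (((tendsto_const_nhds (x := (1:ℝ)) (f := atTop (α := ℝ))).sub ha0).const_mul
      (2 * μ)).sub (hc1.mul hinv)
    have h2 : (2 * μ) * (1 - 0) - 1 * 0 = 2 * μ := by ring
    rw [h2] at h
    refine h.congr' ?_
    filter_upwards [eventually_gt_atTop 0] with t ht
    unfold Bq cc
    field_simp
  have hDt : Tendsto (fun t : ℝ => Dq μ t / t ^ 2) atTop (nhds (4 * μ ^ 2)) := by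
    have h := (hBt.mul hBt).sub ((hc1.mul hinv).mul (hc1.mul hinv))
    have h2 : (2 * μ) * (2 * μ) - (1 * 0) * (1 * 0) = 4 * μ ^ 2 := by ring
    rw [h2] at h
    refine h.congr' ?_
    filter_upwards [eventually_gt_atTop 0] with t ht
    unfold Dq
    field_simp
  have hst : Tendsto (fun t : ℝ => Real.sqrt (Dq μ t) / t) atTop (nhds (2 * μ)) := by
    have h : Tendsto (fun t : ℝ => Real.sqrt (Dq μ t / t ^ 2)) atTop (nhds (2 * μ)) := by
      have := (Real.continuous_sqrt.tendsto (4 * μ ^ 2)).comp hDt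
      rwa [show Real.sqrt (4 * μ ^ 2) = 2 * μ by
        rw [show (4 : ℝ) * μ ^ 2 = (2 * μ) ^ 2 by ring, Real.sqrt_sq (by positivity)]] at this
    refine h.congr' ?_
    filter_upwards [eventual_bounds μ hμ] with t ht
    obtain ⟨u1, u2, u3, u4⟩ := ht
    have hD := hD_pos hμ u1 u2 u3 u4
    rw [Real.sqrt_div hD.le, Real.sqrt_sq (by linarith)]
  have hS : Tendsto (fun t : ℝ => Bq μ t / t + Real.sqrt (Dq μ t) / t) atTop
      (nhds (4 * μ)) := by
    have := hBt.add hst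
    rwa [show (2:ℝ) * μ + 2 * μ = 4 * μ by ring] at this
  have h := (hc1.mul hc1).div hS (by positivity)
  rw [show (1:ℝ) * 1 / (4 * μ) = 1 / (4 * μ) by ring] at h
  refine h.congr' ?_
  filter_upwards [eventual_bounds μ hμ] with t ht
  obtain ⟨u1, u2, u3, u4⟩ := ht
  have hb := hB_lb hμ u1 u2 u3 u4
  have hD := hD_pos hμ u1 u2 u3 u4
  have hs : Real.sqrt (Dq μ t) ^ 2 = Dq μ t := Real.sq_sqrt hD.le
  have hsn : 0 ≤ Real.sqrt (Dq μ t) := Real.sqrt_nonneg _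
  have hid : Xminus μ t * (Bq μ t + Real.sqrt (Dq μ t)) = cc μ t ^ 2 := by
    rw [Xminus_eq]
    have hDd : Dq μ t = Bq μ t ^ 2 - cc μ t ^ 2 := rfl
    nlinarith [hs]
  have hSpos : 0 < Bq μ t + Real.sqrt (Dq μ t) := by linarith
  have ht0 : (0:ℝ) < t := by linarith
  simp only [Pi.div_apply]
  rw [← add_div, div_div_eq_mul_div]
  field_simp
  linear_combination (-1) * hid


end BOUaux

open BOUaux in
/-- Monotonicity of the exponent `f_t`: for all large `t`, `0 < c_t < t`, the derivative of
`f_t` is non-positive on `[0, c_t]` and non-negative on `[c_t, t]` (so `f_t` is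
non-increasing on `[0, c_t]` and non-decreasing on `[c_t, t]`); moreover
`c_t / log t → 1/(2μ)` as `t → ∞`. -/
theorem exponent_monotonicity (μ : ℝ) (hμ : 0 < μ) :
    (∃ T : ℝ, ∀ t : ℝ, T ≤ t →
      0 < cCrit μ t ∧ cCrit μ t < t ∧
      (∀ u ∈ Set.Icc 0 (cCrit μ t), deriv (fExp μ t) u ≤ 0) ∧
      (∀ u ∈ Set.Icc (cCrit μ t) t, 0 ≤ deriv (fExp μ t) u) ∧
      AntitoneOn (fExp μ t) (Set.Icc 0 (cCrit μ t)) ∧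
      MonotoneOn (fExp μ t) (Set.Icc (cCrit μ t) t)) ∧
    Tendsto (fun t : ℝ => cCrit μ t / Real.log t) atTop (nhds (1 / (2 * μ))) := by
  constructor
  · rw [← eventually_atTop]
    filter_upwards [eventual_bounds μ hμ] with t ht
    obtain ⟨h1, h2, h3, h4⟩ := ht
    have hX0 := hX_pos hμ h1 h2 h3 h4
    have hmc := two_mu_cCrit hμ h1 h2 h3 h4
    have hnp : ∀ u ∈ Set.Icc 0 (cCrit μ t), deriv (fExp μ t) u ≤ 0 := by
      intro u hu
      obtain ⟨hu0, hu1⟩ := hu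
      apply deriv_nonpos_of hμ h1 h2 h3 h4
      · calc Xminus μ t = Real.exp (Real.log (Xminus μ t)) := (Real.exp_log hX0).symm
          _ ≤ Real.exp (-(2 * μ * u)) := by
              apply Real.exp_le_exp.mpr
              have h5 : 2 * μ * u ≤ 2 * μ * cCrit μ t :=
                mul_le_mul_of_nonneg_left hu1 (by positivity)
              rw [hmc] at h5
              linarith
      · calc Real.exp (-(2 * μ * u)) ≤ Real.exp 0 := by
              apply Real.exp_le_exp.mpr; nlinarith
          _ = 1 := Real.exp_zero
    have hnn : ∀ u ∈ Set.Icc (cCrit μ t) t, 0 ≤ deriv (fExp μ t) u := by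
      intro u hu
      obtain ⟨hu0, hu1⟩ := hu
      apply deriv_nonneg_of hμ h1 h2 h3 h4
      · unfold aa
        apply Real.exp_le_exp.mpr
        nlinarith
      · calc Real.exp (-(2 * μ * u)) ≤ Real.exp (Real.log (Xminus μ t)) := by
              apply Real.exp_le_exp.mpr
              have h5 : 2 * μ * cCrit μ t ≤ 2 * μ * u :=
                mul_le_mul_of_nonneg_left hu0 (by positivity)
              rw [hmc] at h5
              linarith
          _ = Xminus μ t := Real.exp_log hX0
    have hdiff : Differentiable ℝ (fExp μ t) := fun u =>
      (hasDerivAt_fExp μ t u (hden_pos hμ h1 h2 h3 h4 u).ne').differentiableAt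
    refine ⟨cCrit_pos hμ h1 h2 h3 h4, cCrit_lt hμ h1 h2 h3 h4, hnp, hnn, ?_, ?_⟩
    · exact antitoneOn_of_deriv_nonpos (convex_Icc _ _) hdiff.continuous.continuousOn
        hdiff.differentiableOn (fun u hu => hnp u (interior_subset hu))
    · exact monotoneOn_of_deriv_nonneg (convex_Icc _ _) hdiff.continuous.continuousOn
        hdiff.differentiableOn (fun u hu => hnn u (interior_subset hu))
  · have hXt := tX_tendsto μ hμ
    have hlog : Tendsto (fun t : ℝ => Real.log (t * Xminus μ t)) atTop
        (nhds (Real.log (1 / (4 * μ)))) :=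
      ((Real.continuousAt_log (by positivity)).tendsto.comp hXt)
    have hdiv : Tendsto (fun t : ℝ => Real.log (t * Xminus μ t) / Real.log t) atTop
        (nhds 0) := hlog.div_atTop Real.tendsto_log_atTop
    have h := ((tendsto_const_nhds (x := (1:ℝ)) (f := atTop (α := ℝ))).sub hdiv).div_const (2 * μ)
    rw [show ((1:ℝ) - 0) / (2 * μ) = 1 / (2 * μ) by ring] at h
    refine h.congr' ?_
    filter_upwards [eventual_bounds μ hμ, Real.tendsto_log_atTop.eventually_gt_atTop 0]
      with t ht hlt
    obtain ⟨h1, h2, h3, h4⟩ := ht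
    have hX0 := hX_pos hμ h1 h2 h3 h4
    have ht0 : (0:ℝ) < t := by linarith
    rw [Real.log_mul ht0.ne' hX0.ne']
    unfold cCrit
    have hlne : Real.log t ≠ 0 := hlt.ne'
    have hmne : (2*μ) ≠ 0 := by positivity
    rw [div_right_comm]
    congr 1
    field_simp
    ring
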